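/- Let K be the convex hull in ℝ^n of {v_1, ..., v_n, 0}, where v_1, ..., v_n ∈ ℤ^n are linearly independent and K is an empty lattice simplex. Suppose x = Σ_{i=1}^n α_i v_i with all α_i ≥ 0, n−1 < Σ α_i ≤ n, x ∈ ℤ^n, and α_i < 1 for every i. Then a contradiction follows; indeed the point y = Σ_{i=1}^n (1 − α_i) v_i lies in K ∩ ℤ^n, hence is an extreme point v_j, forcing Σ α_i = n−1. Consequently, no such x exists: every lattice point x ∈ nK with barycentric coefficients α_i all less than 1 satisfies Σ α_i ≤ n−1. -/

import Mathlib

/-!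
The lattice point `y = ∑ (1 - α i) • v i = ∑ v i - x` has nonnegative coefficients whose sum
`n - ∑ α i` lies strictly between `0` and `1`, so `y ∈ K ∩ ℤⁿ`. Emptiness makes `y` a vertex,
`0` or some `v j`, whose coefficients sum to `0` or `1` by linear independence.
-/

open Pointwise

/-- The set of lattice points (points with integer coordinates) of `ℝ^n`. -/
def latticePoints (n : ℕ) : Set (Fin n → ℝ) := {x | ∀ i, ∃ z : ℤ, x i = (z : ℝ)}

def latticeAddSubgroup (n : ℕ) : AddSubgroup (Fin n → ℝ) where
  carrier := latticePoints n
  zero_mem' i := ⟨0, by simp⟩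
  add_mem' {x y} hx hy i := by
    obtain ⟨a, ha⟩ := hx i
    obtain ⟨b, hb⟩ := hy i
    exact ⟨a + b, by simp [ha, hb]⟩
  neg_mem' {x} hx i := by
    obtain ⟨a, ha⟩ := hx i
    exact ⟨-a, by simp [ha]⟩

theorem sum_smul_mem_convexHull_insert_zero {ι E : Type*} [Fintype ι] [AddCommGroup E]
    [Module ℝ E] (v : ι → E) {w : ι → ℝ} (hw₀ : ∀ i, 0 ≤ w i) (hw₁ : ∑ i, w i ≤ 1) :
    ∑ i, w i • v i ∈ convexHull ℝ ({0} ∪ Set.range v) := by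
  -- the vertex `0` takes the remaining weight `1 - ∑ i, w i`
  have h := (convex_convexHull ℝ ({0} ∪ Set.range v)).sum_mem
    (t := Finset.univ) (w := fun o : Option ι => o.elim (1 - ∑ i, w i) w)
    (z := fun o => o.elim 0 v)
    (by rintro (_ | i) _ <;> simp [hw₀, hw₁])
    (by simp [Fintype.sum_option])
    (by
      rintro (_ | i) _
      · exact subset_convexHull ℝ _ (Or.inl rfl)
      · exact subset_convexHull ℝ _ (Or.inr ⟨i, rfl⟩))
  simpa [Fintype.sum_option] using h

section LinearIndependent

variable {ι R M : Type*} [Fintype ι] [Semiring R] [AddCommMonoid M] [Module R M]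
  {v : ι → M} {c : ι → R}

theorem LinearIndependent.sum_eq_zero_of_sum_smul_eq_zero (hv : LinearIndependent R v)
    (h : ∑ i, c i • v i = 0) : ∑ i, c i = 0 := by
  have hc := Fintype.linearIndependent_iffₛ.1 hv c 0 (by simpa using h)
  simp [hc]

theorem LinearIndependent.sum_eq_one_of_sum_smul_eq (hv : LinearIndependent R v) [DecidableEq ι]
    {j : ι} (h : ∑ i, c i • v i = v j) : ∑ i, c i = 1 := by
  have hc := Fintype.linearIndependent_iffₛ.1 hv c (Pi.single j 1) (by simpa [Pi.single_apply])
  simp [hc]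

end LinearIndependent

theorem empty_simplex_no_bad_point_general (n : ℕ) (hn : 2 ≤ n)
    (v : Fin n → Fin n → ℝ) (hvL : ∀ i, v i ∈ latticePoints n)
    (hind : LinearIndependent ℝ v)
    (K : Set (Fin n → ℝ)) (hK : K = convexHull ℝ ({0} ∪ Set.range v))
    (hempty : K ∩ latticePoints n = {0} ∪ Set.range v)
    (α : Fin n → ℝ) (hα1 : ∀ i, α i < 1)
    (hlow : (n : ℝ) - 1 < ∑ i, α i)
    (x : Fin n → ℝ) (hx : x = ∑ i, α i • v i) (hxL : x ∈ latticePoints n) :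
    False := by
  classical
  have : Nonempty (Fin n) := ⟨⟨0, by omega⟩⟩
  have hsum_pos : 0 < ∑ i, (1 - α i) :=
    Finset.sum_pos (fun i _ => sub_pos.2 (hα1 i)) Finset.univ_nonempty
  have hsum_lt : ∑ i, (1 - α i) < 1 := by
    simp only [Finset.sum_sub_distrib, Finset.sum_const, Finset.card_univ, Fintype.card_fin,
      nsmul_eq_mul, mul_one]
    linarith
  have hyK : ∑ i, (1 - α i) • v i ∈ K :=
    hK ▸ sum_smul_mem_convexHull_insert_zero v (fun i => sub_nonneg.2 (hα1 i).le) hsum_lt.le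
  have hyL : ∑ i, (1 - α i) • v i ∈ latticePoints n := by
    have hy : ∑ i, (1 - α i) • v i = ∑ i, v i - x := by simp [hx, sub_smul]
    rw [hy]
    exact (latticeAddSubgroup n).sub_mem
      ((latticeAddSubgroup n).sum_mem fun i _ => hvL i) hxL
  rcases hempty ▸ Set.mem_inter hyK hyL with h0 | ⟨j, hj⟩
  · linarith [hind.sum_eq_zero_of_sum_smul_eq_zero h0]
  · linarith [hind.sum_eq_one_of_sum_smul_eq hj.symm]

/-- Key step in the proof of the decomposition lemma for empty lattice simplices
(`n ≥ 2`): if `K = cvx{v_1, …, v_n, 0}` is an empty lattice simplex with the `v i`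
linearly independent lattice vectors, then there is no lattice point
`x = ∑ α i • v i ∈ nK` with all barycentric coefficients `0 ≤ α i < 1` and
`n - 1 < ∑ α i ≤ n`; equivalently, every lattice point of `nK` whose coefficients are
all less than `1` satisfies `∑ α i ≤ n - 1`. -/
theorem empty_simplex_no_bad_point (n : ℕ) (hn : 2 ≤ n)
    (v : Fin n → Fin n → ℝ) (hvL : ∀ i, v i ∈ latticePoints n)
    (hind : LinearIndependent ℝ v)
    (K : Set (Fin n → ℝ)) (hK : K = convexHull ℝ ({0} ∪ Set.range v))
    (hempty : K ∩ latticePoints n = {0} ∪ Set.range v)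
    (α : Fin n → ℝ) (hα0 : ∀ i, 0 ≤ α i) (hα1 : ∀ i, α i < 1)
    (hlow : (n : ℝ) - 1 < ∑ i, α i) (hhigh : ∑ i, α i ≤ (n : ℝ))
    (x : Fin n → ℝ) (hx : x = ∑ i, α i • v i) (hxL : x ∈ latticePoints n) :
    False :=
  empty_simplex_no_bad_point_general n hn v hvL hind K hK hempty α hα1 hlow x hx hxL
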